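/- arXiv:0804.2246 — 4 statements merged into one kernel-verified Lean document; each statement's English description precedes it below -/
import Mathlib

section
/- With the notation of the previous statement (ρ a density matrix on H = ⊗_i ℂ^{d_i}, ρ̃_u = (⊗U_i) ρ* (⊗U_i†), |𝒮_u⟩ = ⊗_i (I⊗U_i)|S_i⟩, and 𝒫_u^{(i ī)} = |S_{u_i}⟩⟨S_{u_i}|), one has tr(ρ ρ̃_u) = (∏_{i=1}^n d_i) · tr[(⊗_{i=1}^n 𝒫_u^{(i ī)}) (ρ ⊗ ρ)]. -/
open ComplexOrder Matrix Kronecker BigOperators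

/-- The tensor product `U₁ ⊗ ⋯ ⊗ Uₙ` of local operators. -/
noncomputable def bigTensor (n : ℕ) (d : Fin n → ℕ)
    (U : (i : Fin n) → Matrix (Fin (d i)) (Fin (d i)) ℂ) :
    Matrix ((i : Fin n) → Fin (d i)) ((i : Fin n) → Fin (d i)) ℂ :=
  Matrix.of fun x y => ∏ i, U i (x i) (y i)

/-- `|𝒮ᵤ⟩ = ⊗ᵢ (I ⊗ Uᵢ)|Sᵢ⟩`. -/
noncomputable def mesU (n : ℕ) (d : Fin n → ℕ)
    (U : (i : Fin n) → Matrix (Fin (d i)) (Fin (d i)) ℂ) :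
    ((i : Fin n) → Fin (d i)) × ((i : Fin n) → Fin (d i)) → ℂ :=
  fun p => ∏ i, U i (p.2 i) (p.1 i) * (((Real.sqrt (d i))⁻¹ : ℝ) : ℂ)

/-- The antilinearly transformed state `ρ̃ᵤ = (⊗Uᵢ) ρ* (⊗Uᵢ†)`. -/
noncomputable def rhoTildeU (n : ℕ) (d : Fin n → ℕ)
    (U : (i : Fin n) → Matrix (Fin (d i)) (Fin (d i)) ℂ)
    (ρ : Matrix ((i : Fin n) → Fin (d i)) ((i : Fin n) → Fin (d i)) ℂ) :
    Matrix ((i : Fin n) → Fin (d i)) ((i : Fin n) → Fin (d i)) ℂ :=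
  bigTensor n d U * ρ.map (starRingEnd ℂ) * (bigTensor n d U)ᴴ

/-! Up to the factor `∏ᵢ dᵢ^{-1/2}`, `|𝒮ᵤ⟩` is the vectorisation of `V = ⊗ᵢ Uᵢ`, and
`(B ⊗ A) vec V = vec (A V Bᵀ)`. Hence `⟨vec V| ρ ⊗ ρ |vec V⟩ = tr (ρ V ρᵀ V†)`, which is
`tr (ρ ρ̃ᵤ)` because `ρ* = ρᵀ` for Hermitian `ρ`. -/

theorem Matrix.trace_vecMulVec_vec_mul_kronecker {m n R : Type*} [Fintype m] [Fintype n]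
    [CommSemiring R] [Star R] (V : Matrix m n R) (A : Matrix m m R) (B : Matrix n n R) :
    (vecMulVec (vec V) (star (vec V)) * (B ⊗ₖ A)).trace = (A * V * Bᵀ * Vᴴ).trace := by
  rw [trace_mul_comm, mul_vecMulVec, trace_vecMulVec, dotProduct_comm, kronecker_mulVec_vec,
    star_vec_dotProduct_vec, trace_mul_comm]

theorem Matrix.IsHermitian.map_star_eq_transpose {n α : Type*} [Star α] {A : Matrix n n α}
    (hA : A.IsHermitian) : A.map star = Aᵀ := by
  rw [← conjTranspose_transpose, hA.eq]

theorem mesU_eq_smul_vec (n : ℕ) (d : Fin n → ℕ)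
    (U : (i : Fin n) → Matrix (Fin (d i)) (Fin (d i)) ℂ) :
    mesU n d U = (∏ i, (((Real.sqrt (d i))⁻¹ : ℝ) : ℂ)) • vec (bigTensor n d U) := by
  ext p
  simp only [mesU, Pi.smul_apply, vec, bigTensor, of_apply, smul_eq_mul, Finset.prod_mul_distrib,
    mul_comm]

theorem vecMulVec_mesU (n : ℕ) (d : Fin n → ℕ)
    (U : (i : Fin n) → Matrix (Fin (d i)) (Fin (d i)) ℂ) :
    vecMulVec (mesU n d U) (star (mesU n d U))
      = (∏ i, (d i : ℂ))⁻¹ • vecMulVec (vec (bigTensor n d U)) (star (vec (bigTensor n d U))) := by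
  have inv_sqrt_mul_self (k : ℕ) :
      (((Real.sqrt k)⁻¹ : ℝ) : ℂ) * (((Real.sqrt k)⁻¹ : ℝ) : ℂ) = (k : ℂ)⁻¹ := by
    rw [← Complex.ofReal_mul, ← mul_inv, Real.mul_self_sqrt (Nat.cast_nonneg _)]
    push_cast
    rfl
  rw [mesU_eq_smul_vec, star_smul, smul_vecMulVec, vecMulVec_smul, smul_smul, star_prod]
  simp only [Complex.star_def, Complex.conj_ofReal, ← Finset.prod_mul_distrib, inv_sqrt_mul_self,
    Finset.prod_inv_distrib]

theorem rhoTildeU_eq_of_isHermitian (n : ℕ) (d : Fin n → ℕ)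
    (U : (i : Fin n) → Matrix (Fin (d i)) (Fin (d i)) ℂ)
    {ρ : Matrix ((i : Fin n) → Fin (d i)) ((i : Fin n) → Fin (d i)) ℂ} (hρ : ρ.IsHermitian) :
    rhoTildeU n d U ρ = bigTensor n d U * ρᵀ * (bigTensor n d U)ᴴ := by
  rw [rhoTildeU, ← hρ.map_star_eq_transpose]
  rfl

theorem stmt5_general (n : ℕ) (d : Fin n → ℕ) (hd : ∀ i, 0 < d i)
    (ρ : Matrix ((i : Fin n) → Fin (d i)) ((i : Fin n) → Fin (d i)) ℂ)
    (hρ : ρ.PosSemidef)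
    (U : (i : Fin n) → Matrix (Fin (d i)) (Fin (d i)) ℂ) :
    (ρ * rhoTildeU n d U ρ).trace
      = (∏ i, (d i : ℂ)) *
        (vecMulVec (mesU n d U) (star (mesU n d U)) * (ρ ⊗ₖ ρ)).trace := by
  have hdim : (∏ i, (d i : ℂ)) ≠ 0 :=
    Finset.prod_ne_zero_iff.mpr fun i _ => by exact_mod_cast (hd i).ne'
  rw [vecMulVec_mesU, smul_mul_assoc, trace_smul, trace_vecMulVec_vec_mul_kronecker, smul_eq_mul,
    mul_inv_cancel_left₀ hdim, rhoTildeU_eq_of_isHermitian n d U hρ.isHermitian]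
  simp only [Matrix.mul_assoc]

/-- `tr(ρ ρ̃ᵤ) = (∏ᵢ dᵢ) · tr[(⊗ᵢ 𝒫ᵤ^{(i ī)})(ρ ⊗ ρ)]`, where the reordered tensor
product of the projectors `𝒫ᵤ^{(i ī)} = |S_{uᵢ}⟩⟨S_{uᵢ}|` is `|𝒮ᵤ⟩⟨𝒮ᵤ|`. -/
theorem stmt5 (n : ℕ) (d : Fin n → ℕ) (hd : ∀ i, 0 < d i)
    (ρ : Matrix ((i : Fin n) → Fin (d i)) ((i : Fin n) → Fin (d i)) ℂ)
    (hρ : ρ.PosSemidef) (htr : ρ.trace = 1)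
    (U : (i : Fin n) → Matrix (Fin (d i)) (Fin (d i)) ℂ)
    (hU : ∀ i, U i ∈ Matrix.unitaryGroup (Fin (d i)) ℂ) :
    (ρ * rhoTildeU n d U ρ).trace
      = (∏ i, (d i : ℂ)) *
        (vecMulVec (mesU n d U) (star (mesU n d U)) * (ρ ⊗ₖ ρ)).trace :=
  stmt5_general n d hd ρ hρ U
end

section
/- Let |S_y⟩ = (σ_y ⊗ I)(1/√2)(|00⟩+|11⟩) on ℂ²⊗ℂ² (i.e., up to phase the singlet state), and for a two-qubit density matrix ρ set ρ̃ = (σ_y⊗σ_y) ρ* (σ_y⊗σ_y). Then tr(ρ ρ̃) = 4 · tr[(|S_y⟩⟨S_y| ⊗ |S_y⟩⟨S_y|)(ρ ⊗ ρ)], where the first projector acts on the pair of 'a' qubits of the two copies and the second on the pair of 'b' qubits. -/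
open ComplexOrder Matrix Kronecker

/-- The Pauli-Y matrix. -/
noncomputable def pauliY : Matrix (Fin 2) (Fin 2) ℂ := !![0, -Complex.I; Complex.I, 0]

/-- `|S_y⟩ = (σ_y ⊗ I)(1/√2)(|00⟩+|11⟩)`. -/
noncomputable def sY : Fin 2 × Fin 2 → ℂ :=
  (pauliY ⊗ₖ (1 : Matrix (Fin 2) (Fin 2) ℂ)) *ᵥ
    fun p => if p.1 = p.2 then (((Real.sqrt 2)⁻¹ : ℝ) : ℂ) else 0

/-- `|S_y⟩_{a₁a₂} ⊗ |S_y⟩_{b₁b₂}`, reordered to live on two copies `(a₁,b₁),(a₂,b₂)`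
of the two-qubit system. -/
noncomputable def sYsY : ((Fin 2 × Fin 2) × (Fin 2 × Fin 2)) → ℂ :=
  fun q => sY (q.1.1, q.2.1) * sY (q.1.2, q.2.2)

/-- `ρ̃ = (σ_y⊗σ_y) ρ* (σ_y⊗σ_y)`. -/
noncomputable def rhoTilde (ρ : Matrix (Fin 2 × Fin 2) (Fin 2 × Fin 2) ℂ) :
    Matrix (Fin 2 × Fin 2) (Fin 2 × Fin 2) ℂ :=
  (pauliY ⊗ₖ pauliY) * ρ.map (starRingEnd ℂ) * (pauliY ⊗ₖ pauliY)

lemma sY_apply (p : Fin 2 × Fin 2) : sY p = pauliY p.1 p.2 * (((Real.sqrt 2)⁻¹ : ℝ) : ℂ) := by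
  obtain ⟨i, j⟩ := p
  simp [sY, mulVec, dotProduct, Fintype.sum_prod_type, Fin.sum_univ_two, one_apply]

lemma invSqrt2_sq : (((Real.sqrt 2)⁻¹ : ℝ) : ℂ) * (((Real.sqrt 2)⁻¹ : ℝ) : ℂ) = 1/2 := by
  rw [← Complex.ofReal_mul, ← mul_inv, Real.mul_self_sqrt (by norm_num)]
  norm_num

lemma sYsY_apply (p : (Fin 2 × Fin 2) × (Fin 2 × Fin 2)) :
    sYsY p = (pauliY ⊗ₖ pauliY) p.1 p.2 * (1/2) := by
  rw [sYsY, sY_apply, sY_apply, kroneckerMap_apply]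
  rw [mul_mul_mul_comm, invSqrt2_sq]

lemma pauliY_star (i j : Fin 2) : star (pauliY i j) = pauliY j i := by
  fin_cases i <;> fin_cases j <;> simp [pauliY]

lemma sYsY_star (q : (Fin 2 × Fin 2) × (Fin 2 × Fin 2)) :
    star (sYsY q) = (pauliY ⊗ₖ pauliY) q.2 q.1 * (1/2) := by
  rw [sYsY_apply, star_mul', kroneckerMap_apply, star_mul', pauliY_star, pauliY_star]
  simp [kroneckerMap_apply]

set_option maxHeartbeats 4000000 in
lemma key_trace (ρ : Matrix (Fin 2 × Fin 2) (Fin 2 × Fin 2) ℂ) :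
    (vecMulVec sYsY (star sYsY) * (ρ ⊗ₖ ρ)).trace
      = (1/4) * ((pauliY ⊗ₖ pauliY) * ρᵀ * (pauliY ⊗ₖ pauliY) * ρ).trace := by
  simp only [trace, diag_apply, mul_apply, vecMulVec_apply, Pi.star_apply, sYsY_apply,
    sYsY_star, kroneckerMap_apply, transpose_apply, Finset.mul_sum, Finset.sum_mul,
    star_mul', pauliY_star, star_div₀, star_one, star_ofNat]
  simp only [Fintype.sum_prod_type, Fin.sum_univ_two]
  ring

/-- `tr(ρ ρ̃) = 4 tr[(|S_y⟩⟨S_y| ⊗ |S_y⟩⟨S_y|)(ρ ⊗ ρ)]`. -/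
theorem stmt7 (ρ : Matrix (Fin 2 × Fin 2) (Fin 2 × Fin 2) ℂ)
    (hρ : ρ.PosSemidef) (htr : ρ.trace = 1) :
    (ρ * rhoTilde ρ).trace
      = 4 * (vecMulVec sYsY (star sYsY) * (ρ ⊗ₖ ρ)).trace := by
  have hmap : ρ.map (starRingEnd ℂ) = ρᵀ := by
    ext i j
    exact congrFun (congrFun hρ.1 j) i
  rw [key_trace, rhoTilde, hmap, trace_mul_comm]
  ring
end

section
/- For a two-qubit density matrix ρ with ρ̃ = (σ_y⊗σ_y)ρ*(σ_y⊗σ_y), the matrix ρρ̃ has nonnegative real eigenvalues, and consequently each moment m_k = tr[(ρρ̃)^k] is a nonnegative real number. -/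
open ComplexOrder Matrix Kronecker

/-!
Writing `A = S * S` with `S = √A`, the product `A * B = S * (S * B)` has the same nonzero
spectrum and the same trace powers as `S * B * S`, which is positive semidefinite whenever `B` is.
Since `σ_y ⊗ σ_y` is Hermitian and `ρ* = ρᵀ` for Hermitian `ρ`, `ρ̃` is positive semidefinite.
-/

open scoped MatrixOrder

namespace Matrix

theorem trace_pow_mul_comm {n R : Type*} [Fintype n] [DecidableEq n] [CommSemiring R]
    (A B : Matrix n n R) (k : ℕ) : ((A * B) ^ k).trace = ((B * A) ^ k).trace := by
  cases k with
  | zero => simp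
  | succ k =>
    rw [pow_succ', mul_assoc, trace_mul_comm, mul_assoc, mul_pow_mul, ← mul_assoc, ← pow_succ']

theorem IsHermitian.kronecker {m n R : Type*} [CommSemiring R] [StarRing R]
    {A : Matrix m m R} {B : Matrix n n R} (hA : A.IsHermitian) (hB : B.IsHermitian) :
    (A ⊗ₖ B).IsHermitian := by
  rw [IsHermitian, conjTranspose_kronecker, hA.eq, hB.eq]

variable {𝕜 n : Type*} [RCLike 𝕜]

theorem PosSemidef.map_conj {A : Matrix n n 𝕜} (hA : A.PosSemidef) :
    (A.map (starRingEnd 𝕜)).PosSemidef := by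
  have h : A.map (starRingEnd 𝕜) = Aᵀ := by
    conv_rhs => rw [← hA.isHermitian.eq]
    rfl
  exact h ▸ hA.transpose

variable [Fintype n] [DecidableEq n]

theorem PosSemidef.sqrt_mul_mul_sqrt (A : Matrix n n 𝕜) {B : Matrix n n 𝕜}
    (hB : B.PosSemidef) : (CFC.sqrt A * B * CFC.sqrt A).PosSemidef := by
  simpa only [(CFC.sqrt_nonneg A).posSemidef.isHermitian.eq] using
    hB.mul_mul_conjTranspose_same (CFC.sqrt A)

theorem PosSemidef.mul_eq_sqrt_mul_sqrt_mul {A : Matrix n n 𝕜} (hA : A.PosSemidef)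
    (B : Matrix n n 𝕜) : A * B = CFC.sqrt A * (CFC.sqrt A * B) := by
  rw [← mul_assoc, CFC.sqrt_mul_sqrt_self A hA.nonneg]

theorem PosSemidef.nonneg_of_mem_spectrum_mul {A B : Matrix n n 𝕜} (hA : A.PosSemidef)
    (hB : B.PosSemidef) {μ : 𝕜} (hμ : μ ∈ spectrum 𝕜 (A * B)) : 0 ≤ μ := by
  rcases eq_or_ne μ 0 with rfl | hμ0
  · rfl
  have hswap : μ ∈ spectrum 𝕜 (CFC.sqrt A * B * CFC.sqrt A) \ {0} := by
    rw [← spectrum.nonzero_mul_comm, ← hA.mul_eq_sqrt_mul_sqrt_mul]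
    exact ⟨hμ, hμ0⟩
  exact (posSemidef_iff_isHermitian_and_spectrum_nonneg.mp
    (hB.sqrt_mul_mul_sqrt A)).2 hswap.1

theorem PosSemidef.trace_pow_mul_nonneg {A B : Matrix n n 𝕜} (hA : A.PosSemidef)
    (hB : B.PosSemidef) (k : ℕ) : 0 ≤ ((A * B) ^ k).trace := by
  rw [hA.mul_eq_sqrt_mul_sqrt_mul, trace_pow_mul_comm]
  exact ((hB.sqrt_mul_mul_sqrt A).pow k).trace_nonneg

end Matrix

theorem pauliY_isHermitian : pauliY.IsHermitian := by
  ext i j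
  fin_cases i <;> fin_cases j <;> simp [pauliY]

theorem rhoTilde_posSemidef {ρ : Matrix (Fin 2 × Fin 2) (Fin 2 × Fin 2) ℂ}
    (hρ : ρ.PosSemidef) : (rhoTilde ρ).PosSemidef := by
  have hYY := pauliY_isHermitian.kronecker pauliY_isHermitian
  simpa only [rhoTilde, hYY.eq] using hρ.map_conj.mul_mul_conjTranspose_same (pauliY ⊗ₖ pauliY)

theorem stmt8_general (ρ : Matrix (Fin 2 × Fin 2) (Fin 2 × Fin 2) ℂ)
    (hρ : ρ.PosSemidef) :
    (∀ μ ∈ spectrum ℂ (ρ * rhoTilde ρ), ∃ r : ℝ, 0 ≤ r ∧ μ = (r : ℂ)) ∧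
    (∀ k : ℕ, 1 ≤ k → ∃ r : ℝ, 0 ≤ r ∧ ((ρ * rhoTilde ρ) ^ k).trace = (r : ℂ)) := by
  have hρ' := rhoTilde_posSemidef hρ
  refine ⟨fun μ hμ ↦ ?_, fun k _ ↦ ?_⟩
  · obtain ⟨r, hr, hμ⟩ := RCLike.nonneg_iff_exists_ofReal.mp (hρ.nonneg_of_mem_spectrum_mul hρ' hμ)
    exact ⟨r, hr, hμ.symm⟩
  · obtain ⟨r, hr, htr⟩ := RCLike.nonneg_iff_exists_ofReal.mp (hρ.trace_pow_mul_nonneg hρ' k)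
    exact ⟨r, hr, htr.symm⟩

/-- `ρρ̃` has nonnegative real eigenvalues, and each moment `m_k = tr[(ρρ̃)^k]`
is a nonnegative real number. -/
theorem stmt8 (ρ : Matrix (Fin 2 × Fin 2) (Fin 2 × Fin 2) ℂ)
    (hρ : ρ.PosSemidef) (htr : ρ.trace = 1) :
    (∀ μ ∈ spectrum ℂ (ρ * rhoTilde ρ), ∃ r : ℝ, 0 ≤ r ∧ μ = (r : ℂ)) ∧
    (∀ k : ℕ, 1 ≤ k → ∃ r : ℝ, 0 ≤ r ∧ ((ρ * rhoTilde ρ) ^ k).trace = (r : ℂ)) :=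
  stmt8_general ρ hρ
end

section
/- Let ρ be a density matrix on ℂ^{d_a} ⊗ ℂ^{d_b} and ρ^{T₂} its partial transpose on the second factor. Let V_{1̄⋯(2k−1)‾} be the k-cyclic permutation acting on the k subsystems labelled 1̄,3̄,…,(2k−1)‾ and V_{2⋯2k} the k-cyclic permutation on subsystems 2,4,…,2k. Then tr[(ρ^{T₂})^k] = tr[V_{1̄⋯(2k−1)‾} V_{2⋯2k}† (⊗_{l=1}^k ρ_{(2l−1)‾, 2l})], i.e., the k-th moment of the partial transpose equals the expectation of a product of two cyclic permutations on k copies of ρ. -/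
/-!
Expanding the matrix power entrywise, `tr (M ^ k)` is a sum over closed walks of length `k`,
i.e. over `g : Fin k → n` weighted by `∏ l, M (g l) (g (l + 1))`. For `M = (ρ^{T₂})ᵀ` a walk
`g = (a, b)` contributes `∏ l, ρ (a (l + 1), b l) (a l, b (l + 1))`: the partial transpose makes
the `b`-indices run around the cycle against the `a`-indices. On the other side
`V_a V_b†` is the permutation matrix of `(a, b) ↦ (a ∘ rot, b ∘ rot⁻¹)`, so its trace against
`ρ^{⊗k}` is the same sum after the substitution `b ↦ b ∘ rot`.
-/

open ComplexOrder Matrix Kronecker BigOperators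

/-- Partial transpose on the second factor: `(ρ^{T₂})_{ij,kl} = ρ_{il,kj}`. -/
def ptranspose (da db : ℕ) (ρ : Matrix (Fin da × Fin db) (Fin da × Fin db) ℂ) :
    Matrix (Fin da × Fin db) (Fin da × Fin db) ℂ :=
  Matrix.of fun p q => ρ (p.1, q.2) (q.1, p.2)

section Walks

variable {n R : Type*} [Fintype n] [DecidableEq n] [CommSemiring R]

theorem Matrix.pow_mul_apply_eq_sum_prod (M N : Matrix n n R) (k : ℕ) (i j : n) :
    (M ^ k * N) i j = ∑ g : Fin k → n,
      (∏ l, M ((Fin.cons i g : Fin (k + 1) → n) l.castSucc) (g l)) *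
        N ((Fin.cons i g : Fin (k + 1) → n) (Fin.last k)) j := by
  induction k generalizing i with
  | zero => simp
  | succ k ih =>
    rw [pow_succ', mul_assoc, mul_apply]
    simp_rw [ih, Finset.mul_sum]
    rw [← (Fin.consEquiv fun _ => n).sum_comp, Fintype.sum_prod_type]
    refine Finset.sum_congr rfl fun z _ => Finset.sum_congr rfl fun g _ => ?_
    simp only [Fin.consEquiv_apply, Fin.prod_univ_succ, Fin.castSucc_zero, Fin.cons_zero,
      ← Fin.succ_castSucc, Fin.cons_succ, ← Fin.succ_last, mul_assoc]

theorem Matrix.trace_pow_eq_sum_prod_finRotate (M : Matrix n n R) {k : ℕ} (hk : k ≠ 0) :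
    (M ^ k).trace = ∑ g : Fin k → n, ∏ l, M (g l) (g (finRotate k l)) := by
  obtain ⟨k, rfl⟩ := Nat.exists_eq_succ_of_ne_zero hk
  simp_rw [trace, diag, pow_succ, pow_mul_apply_eq_sum_prod]
  rw [← (Fin.consEquiv fun _ => n).sum_comp, Fintype.sum_prod_type]
  refine Finset.sum_congr rfl fun i _ => Finset.sum_congr rfl fun g _ => ?_
  simp [Fin.prod_univ_castSucc, Fin.coeSucc_eq_succ]

end Walks

section PermutationMatrices

variable {X R : Type*} [DecidableEq X] [Semiring R]

theorem Matrix.conjTranspose_of_ite_eq [StarRing R] (g : X ≃ X) :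
    (of fun p q => if q = g p then (1 : R) else 0)ᴴ =
      of fun p q => if q = g.symm p then 1 else 0 := by
  ext p q
  simp [apply_ite (star : R → R), Equiv.eq_symm_apply, eq_comm]

variable [Fintype X]

theorem Matrix.of_ite_eq_mul (f : X → X) (M : Matrix X X R) :
    of (fun p q => if q = f p then (1 : R) else 0) * M = M.submatrix f id := by
  ext p q
  simp [mul_apply, ite_mul]

theorem Matrix.trace_of_ite_eq_mul_conjTranspose_mul [StarRing R] (f : X → X) (g : X ≃ X)
    (C : Matrix X X R) :
    (of (fun p q => if q = f p then (1 : R) else 0) *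
        (of fun p q => if q = g p then (1 : R) else 0)ᴴ * C).trace =
      ∑ p, C (g.symm (f p)) p := by
  rw [mul_assoc, conjTranspose_of_ite_eq, of_ite_eq_mul, of_ite_eq_mul]
  rfl

end PermutationMatrices

section SlotPermutations

variable {ι α β R : Type*} [Fintype ι] [DecidableEq ι] [Fintype α] [DecidableEq α]
  [Fintype β] [DecidableEq β] [Semiring R] [StarRing R]

theorem Matrix.trace_slotPerm_mul_conjTranspose_slotPerm_mul (σ τ : Equiv.Perm ι)
    (C : Matrix ((ι → α) × (ι → β)) ((ι → α) × (ι → β)) R) :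
    ((of fun p q : (ι → α) × (ι → β) =>
        if q.1 = p.1 ∘ ⇑σ ∧ q.2 = p.2 then (1 : R) else 0) *
      (of fun p q : (ι → α) × (ι → β) =>
        if q.1 = p.1 ∧ q.2 = p.2 ∘ ⇑τ then (1 : R) else 0)ᴴ * C).trace =
      ∑ p, C (p.1 ∘ σ, p.2 ∘ τ.symm) p := by
  let g : (ι → α) × (ι → β) ≃ (ι → α) × (ι → β) :=
    (Equiv.refl _).prodCongr (τ.symm.arrowCongr (Equiv.refl β))
  have hσ : ∀ p q : (ι → α) × (ι → β), (q.1 = p.1 ∘ σ ∧ q.2 = p.2) ↔ q = (p.1 ∘ σ, p.2) :=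
    fun p q => by rw [Prod.ext_iff]
  have hτ : ∀ p q : (ι → α) × (ι → β), (q.1 = p.1 ∧ q.2 = p.2 ∘ τ) ↔ q = g p :=
    fun p q => by rw [Prod.ext_iff]; rfl
  simp_rw [hσ, hτ, trace_of_ite_eq_mul_conjTranspose_mul]
  rfl

end SlotPermutations

theorem trace_ptranspose_pow (da db : ℕ) {k : ℕ} (hk : k ≠ 0)
    (ρ : Matrix (Fin da × Fin db) (Fin da × Fin db) ℂ) :
    ((ptranspose da db ρ) ^ k).trace = ∑ p : (Fin k → Fin da) × (Fin k → Fin db),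
      ∏ l, ρ (p.1 (finRotate k l), p.2 ((finRotate k).symm l)) (p.1 l, p.2 l) := by
  rw [← trace_transpose, transpose_pow, trace_pow_eq_sum_prod_finRotate _ hk,
    ← (Equiv.arrowProdEquivProdArrow _ _ _).symm.sum_comp]
  refine Fintype.sum_equiv
    ((Equiv.refl _).prodCongr ((finRotate k).symm.arrowCongr (Equiv.refl _))) _ _ fun p => ?_
  simp [ptranspose, Equiv.arrowProdEquivProdArrow, -finRotate_apply, -finRotate_symm_apply]

theorem stmt9_general (da db k : ℕ) (hk : 0 < k)
    (ρ : Matrix (Fin da × Fin db) (Fin da × Fin db) ℂ) :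
    ((ptranspose da db ρ) ^ k).trace
      = ((Matrix.of fun p q : (Fin k → Fin da) × (Fin k → Fin db) =>
            if q.1 = p.1 ∘ ⇑(finRotate k) ∧ q.2 = p.2 then (1 : ℂ) else 0) *
         (Matrix.of fun p q : (Fin k → Fin da) × (Fin k → Fin db) =>
            if q.1 = p.1 ∧ q.2 = p.2 ∘ ⇑(finRotate k) then (1 : ℂ) else 0)ᴴ *
         (Matrix.of fun p q : (Fin k → Fin da) × (Fin k → Fin db) =>
            ∏ l, ρ (p.1 l, p.2 l) (q.1 l, q.2 l))).trace := by
  rw [trace_ptranspose_pow da db hk.ne', trace_slotPerm_mul_conjTranspose_slotPerm_mul]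
  rfl

/-- `tr[(ρ^{T₂})^k] = tr[V_{1̄⋯(2k−1)‾} V_{2⋯2k}† (⊗_{l=1}^k ρ)]`: the `k`-th moment of
the partial transpose is the expectation of two cyclic permutations (one on the `a`
slots, the adjoint of one on the `b` slots) on `k` copies of `ρ`. -/
theorem stmt9 (da db k : ℕ) (hk : 0 < k)
    (ρ : Matrix (Fin da × Fin db) (Fin da × Fin db) ℂ)
    (hρ : ρ.PosSemidef) (htr : ρ.trace = 1) :
    ((ptranspose da db ρ) ^ k).trace
      = ((Matrix.of fun p q : (Fin k → Fin da) × (Fin k → Fin db) =>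
            if q.1 = p.1 ∘ ⇑(finRotate k) ∧ q.2 = p.2 then (1 : ℂ) else 0) *
         (Matrix.of fun p q : (Fin k → Fin da) × (Fin k → Fin db) =>
            if q.1 = p.1 ∧ q.2 = p.2 ∘ ⇑(finRotate k) then (1 : ℂ) else 0)ᴴ *
         (Matrix.of fun p q : (Fin k → Fin da) × (Fin k → Fin db) =>
            ∏ l, ρ (p.1 l, p.2 l) (q.1 l, q.2 l))).trace :=
  stmt9_general da db k hk ρ
end
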